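/- arXiv:2511.13509 — 8 statements merged into one kernel-verified Lean document; each statement's English description precedes it below -/
import Mathlib

section
/- (Lemma 1) Let a, b, c > 0 be real constants, let L > 0, and let V : (0,∞) → (0,∞) be a function differentiable at L whose values satisfy a·V(s)/s + b·V(s)³ = c for all s in a neighborhood of L. Define T(s) := s / V(s). Then T is differentiable at L and T'(L) > 0. -/
/-!
Differentiating the constraint `a V(s)/s + b V(s)³ = c` at `L` gives
`L V'(L) (a + 3 b V(L)² L) = a V(L)`, so the elasticity `L V'/V` of the speed lies strictly
below `1`. Hence `T' = (V - L V') / V²` is positive: lengthening the path raises the optimal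
speed, but less than proportionally.
-/

theorem hasDerivAt_mul_div_add_mul_cube {a b L V' : ℝ} {V : ℝ → ℝ} (hL : L ≠ 0)
    (hV : HasDerivAt V V' L) :
    HasDerivAt (fun s => a * V s / s + b * V s ^ 3)
      (a * (V' * L - V L) / L ^ 2 + 3 * b * V L ^ 2 * V') L := by
  refine (((hV.const_mul a).div (hasDerivAt_id' L) hL).add
    ((hV.pow 3).const_mul b)).congr_deriv ?_
  ring

theorem mul_lt_of_constraint_deriv_eq_zero {a b L v v' : ℝ} (ha : 0 ≤ a) (hb : 0 < b)
    (hL : 0 < L) (hv : 0 < v) (h : a * (v' * L - v) / L ^ 2 + 3 * b * v ^ 2 * v' = 0) :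
    L * v' < v := by
  have hK : 0 < a + 3 * b * v ^ 2 * L := by positivity
  have hLv' : L * v' * (a + 3 * b * v ^ 2 * L) = a * v := by
    field_simp at h
    linarith
  refine lt_of_mul_lt_mul_right ?_ hK.le
  calc L * v' * (a + 3 * b * v ^ 2 * L) = a * v := hLv'
    _ < a * v + 3 * b * v ^ 3 * L := by simp only [lt_add_iff_pos_right]; positivity
    _ = v * (a + 3 * b * v ^ 2 * L) := by ring

theorem ascent_time_deriv_pos_general (a b c L : ℝ)
    (ha : 0 < a) (hb : 0 < b) (hL : 0 < L)
    (V : ℝ → ℝ) (V' : ℝ)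
    (hpos : ∀ s, 0 < s → 0 < V s)
    (hderiv : HasDerivAt V V' L)
    (heq : ∀ᶠ s in nhds L, a * V s / s + b * (V s) ^ 3 = c) :
    ∃ T' : ℝ, HasDerivAt (fun s => s / V s) T' L ∧ 0 < T' := by
  have hv : 0 < V L := hpos L hL
  have hconstraint : a * (V' * L - V L) / L ^ 2 + 3 * b * V L ^ 2 * V' = 0 :=
    (hasDerivAt_mul_div_add_mul_cube hL.ne' hderiv).unique
      ((hasDerivAt_const L c).congr_of_eventuallyEq heq)
  have hslow : L * V' < V L := mul_lt_of_constraint_deriv_eq_zero ha.le hb hL hv hconstraint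
  refine ⟨_, (hasDerivAt_id' L).div hderiv hv.ne', div_pos ?_ (by positivity)⟩
  linarith

/-- Lemma 1: the ascent time T(s) = s / V(s) is differentiable at L
with positive derivative. -/
theorem ascent_time_deriv_pos (a b c L : ℝ)
    (ha : 0 < a) (hb : 0 < b) (hc : 0 < c) (hL : 0 < L)
    (V : ℝ → ℝ) (V' : ℝ)
    (hpos : ∀ s, 0 < s → 0 < V s)
    (hderiv : HasDerivAt V V' L)
    (heq : ∀ᶠ s in nhds L, a * V s / s + b * (V s) ^ 3 = c) :
    ∃ T' : ℝ, HasDerivAt (fun s => s / V s) T' L ∧ 0 < T' :=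
  ascent_time_deriv_pos_general a b c L ha hb hL V V' hpos hderiv heq
end

section
/- Let a, b, c > 0 be real constants. For each L > 0 let V(L) be the unique positive real solution of a·V/L + b·V³ = c, and define the ascent time T(L) := L / V(L). Then T is strictly increasing on (0,∞): if 0 < L₁ < L₂ then L₁/V(L₁) < L₂/V(L₂). -/
/-!
Write `u = V / L` for the reciprocal of the ascent time, so that the defining equation becomes
`a * u + b * (u * L) ^ 3 = c`. The left-hand side is strictly increasing in `L` and nondecreasing
in `u`, so along the solution curve `u` must strictly decrease as `L` grows.
-/

lemma add_mul_mul_pow_lt {a b L₁ L₂ u₁ u₂ : ℝ} {n : ℕ} (ha : 0 ≤ a) (hb : 0 < b) (hn : n ≠ 0)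
    (hL₁ : 0 < L₁) (hL : L₁ < L₂) (hu₁ : 0 < u₁) (hu : u₁ ≤ u₂) :
    a * u₁ + b * (u₁ * L₁) ^ n < a * u₂ + b * (u₂ * L₂) ^ n := by
  have hprod : u₁ * L₁ < u₂ * L₂ := mul_lt_mul' hu hL hL₁.le (hu₁.trans_le hu)
  have hpow : (u₁ * L₁) ^ n < (u₂ * L₂) ^ n := pow_lt_pow_left₀ hprod (by positivity) hn
  exact add_lt_add_of_le_of_lt (mul_le_mul_of_nonneg_left hu ha) (mul_lt_mul_of_pos_left hpow hb)

lemma mul_div_add_mul_pow_eq {a b v L : ℝ} {n : ℕ} (hL : L ≠ 0) :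
    a * v / L + b * v ^ n = a * (v / L) + b * (v / L * L) ^ n := by
  rw [div_mul_cancel₀ v hL, mul_div_assoc]

theorem ascent_time_strictMono_general (a b c : ℝ)
    (ha : 0 < a) (hb : 0 < b)
    (V : ℝ → ℝ)
    (hV : ∀ L, 0 < L → 0 < V L ∧ a * V L / L + b * (V L) ^ 3 = c)
    (L₁ L₂ : ℝ) (h₁ : 0 < L₁) (h₁₂ : L₁ < L₂) :
    L₁ / V L₁ < L₂ / V L₂ := by
  have h₂ : 0 < L₂ := h₁.trans h₁₂
  obtain ⟨hv₁, he₁⟩ := hV L₁ h₁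
  obtain ⟨hv₂, he₂⟩ := hV L₂ h₂
  have hratio : V L₂ / L₂ < V L₁ / L₁ := by
    by_contra! hle
    have hlt := add_mul_mul_pow_lt ha.le hb three_ne_zero h₁ h₁₂ (div_pos hv₁ h₁) hle
    rw [← mul_div_add_mul_pow_eq h₁.ne', ← mul_div_add_mul_pow_eq h₂.ne', he₁, he₂] at hlt
    exact hlt.false
  simpa only [inv_div] using inv_strictAnti₀ (div_pos hv₂ h₂) hratio

/-- the ascent time T(L) = L / V(L) is strictly increasing on (0,∞). -/
theorem ascent_time_strictMono (a b c : ℝ)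
    (ha : 0 < a) (hb : 0 < b) (hc : 0 < c)
    (V : ℝ → ℝ)
    (hV : ∀ L, 0 < L → 0 < V L ∧ a * V L / L + b * (V L) ^ 3 = c)
    (L₁ L₂ : ℝ) (h₁ : 0 < L₁) (h₁₂ : L₁ < L₂) :
    L₁ / V L₁ < L₂ / V L₂ :=
  ascent_time_strictMono_general a b c ha hb V hV L₁ L₂ h₁ h₁₂
end

section
/- (Proposition 1) Let a, b, c > 0 be real constants and let H, D be reals with H > 0 and D ≥ 0. For each L > 0 let V(L) be the unique positive real solution of a·V/L + b·V³ = c, and define T(L) := L / V(L). Set L₀ := √(H² + D²). Then for every L ≥ L₀ one has T(L) ≥ T(L₀), with strict inequality whenever L > L₀. Consequently, among all ascent paths joining the given start and end points (all of which have arclength at least L₀, the length of the straight segment), the minimum ascent time is attained exactly at arclength L₀. -/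
/-! If `L₁ < L₂` but `T(L₂) ≤ T(L₁)`, then the second path is ridden both faster (`V = L / T`)
and with a larger `V / L = 1 / T`, so both terms of `a·V/L + b·V³` increase and the power balance
`= c` cannot hold at both lengths. Hence `T` is strictly increasing, and the shortest admissible
length, that of the straight segment, is optimal. -/

open Set

theorem strictMonoOn_div_of_power_balance {a b c : ℝ} {V : ℝ → ℝ} (ha : 0 ≤ a) (hb : 0 < b)
    (hV : ∀ L, 0 < L → 0 < V L ∧ a * V L / L + b * V L ^ 3 = c) :
    StrictMonoOn (fun L => L / V L) (Ioi 0) := by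
  intro L₁ hL₁ L₂ hL₂ hlt
  obtain ⟨hV₁, hc₁⟩ := hV L₁ hL₁
  obtain ⟨hV₂, hc₂⟩ := hV L₂ hL₂
  by_contra! hT
  have hT' : L₂ * V L₁ ≤ L₁ * V L₂ := (div_le_div_iff₀ hV₂ hV₁).1 hT
  have hspeed : V L₁ < V L₂ :=
    lt_of_mul_lt_mul_left (hT'.trans_lt (mul_lt_mul_of_pos_right hlt hV₂)) (mem_Ioi.1 hL₂).le
  have hrate : V L₁ / L₁ ≤ V L₂ / L₂ := by
    rw [div_le_div_iff₀ (mem_Ioi.1 hL₁) (mem_Ioi.1 hL₂)]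
    linarith
  have hbalance : a * V L₁ / L₁ + b * V L₁ ^ 3 < a * V L₂ / L₂ + b * V L₂ ^ 3 := by
    simp only [mul_div_assoc]
    exact add_lt_add_of_le_of_lt (mul_le_mul_of_nonneg_left hrate ha)
      (mul_lt_mul_of_pos_left (pow_lt_pow_left₀ hspeed hV₁.le three_ne_zero) hb)
  linarith

theorem straight_line_brachistochrone_general (a b c H D : ℝ)
    (ha : 0 < a) (hb : 0 < b) (hH : 0 < H)
    (V : ℝ → ℝ)
    (hV : ∀ L, 0 < L → 0 < V L ∧ a * V L / L + b * (V L) ^ 3 = c) :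
    ∀ L, Real.sqrt (H ^ 2 + D ^ 2) ≤ L →
      Real.sqrt (H ^ 2 + D ^ 2) / V (Real.sqrt (H ^ 2 + D ^ 2)) ≤ L / V L ∧
      (Real.sqrt (H ^ 2 + D ^ 2) < L →
        Real.sqrt (H ^ 2 + D ^ 2) / V (Real.sqrt (H ^ 2 + D ^ 2)) < L / V L) := by
  intro L hL
  have hL₀ : 0 < Real.sqrt (H ^ 2 + D ^ 2) := Real.sqrt_pos.2 (by positivity)
  have hT := strictMonoOn_div_of_power_balance ha.le hb hV
  exact ⟨(hT.le_iff_le hL₀ (hL₀.trans_le hL)).2 hL, fun hlt => hT hL₀ (hL₀.trans hlt) hlt⟩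

/-- Proposition 1: the minimum ascent time among paths joining the
start/end points (arclength ≥ √(H² + D²)) is attained exactly at the straight line. -/
theorem straight_line_brachistochrone (a b c H D : ℝ)
    (ha : 0 < a) (hb : 0 < b) (hc : 0 < c) (hH : 0 < H) (hD : 0 ≤ D)
    (V : ℝ → ℝ)
    (hV : ∀ L, 0 < L → 0 < V L ∧ a * V L / L + b * (V L) ^ 3 = c) :
    ∀ L, Real.sqrt (H ^ 2 + D ^ 2) ≤ L →
      Real.sqrt (H ^ 2 + D ^ 2) / V (Real.sqrt (H ^ 2 + D ^ 2)) ≤ L / V L ∧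
      (Real.sqrt (H ^ 2 + D ^ 2) < L →
        Real.sqrt (H ^ 2 + D ^ 2) / V (Real.sqrt (H ^ 2 + D ^ 2)) < L / V L) :=
  straight_line_brachistochrone_general a b c H D ha hb hH V hV
end

section
/- Let a, b, c > 0 be real constants, let L > 0, and let V : (0,∞) → (0,∞) be a function differentiable at L whose values satisfy a·V(s)/s + b·V(s)³ = c for all s in a neighborhood of L. Define T(s) := s / V(s). Then T'(L) = (3·b·L²/a) · V'(L). -/
/-!
Differentiating the speed constraint at `L` gives `a (L V' - V) / L² + 3 b V² V' = 0`,
i.e. `a (V - L V') = 3 b L² V² V'`; dividing by `a V²` turns the left side into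
`T'(L) = (V - L V') / V²`.
-/

open Filter Topology

theorem HasDerivAt.eq_zero_of_eventuallyEq_const {𝕜 F : Type*} [NontriviallyNormedField 𝕜]
    [NormedAddCommGroup F] [NormedSpace 𝕜 F] {f : 𝕜 → F} {f' : F} {x : 𝕜} {c : F}
    (hf : HasDerivAt f f' x) (hc : f =ᶠ[𝓝 x] fun _ => c) : f' = 0 :=
  hf.unique ((hasDerivAt_const x c).congr_of_eventuallyEq hc)

theorem hasDerivAt_speed_constraint (a b : ℝ) {V : ℝ → ℝ} {V' L : ℝ} (hV : HasDerivAt V V' L)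
    (hL : L ≠ 0) :
    HasDerivAt (fun s => a * V s / s + b * V s ^ 3)
      (a * (V' * L - V L) / L ^ 2 + 3 * b * V L ^ 2 * V') L := by
  refine (((hV.const_mul a).div (hasDerivAt_id' L) hL).add
    ((hV.pow 3).const_mul b)).congr_deriv ?_
  ring

theorem ascent_time_deriv_relation_general (a b c L : ℝ)
    (ha : 0 < a) (hL : 0 < L)
    (V : ℝ → ℝ) (V' : ℝ)
    (hpos : ∀ s, 0 < s → 0 < V s)
    (hderiv : HasDerivAt V V' L)
    (heq : ∀ᶠ s in nhds L, a * V s / s + b * (V s) ^ 3 = c) :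
    HasDerivAt (fun s => s / V s) (3 * b * L ^ 2 / a * V') L := by
  have hVL : V L ≠ 0 := (hpos L hL).ne'
  have hconstraint : a * (V' * L - V L) / L ^ 2 + 3 * b * V L ^ 2 * V' = 0 :=
    (hasDerivAt_speed_constraint a b hderiv hL.ne').eq_zero_of_eventuallyEq_const heq
  refine ((hasDerivAt_id' L).div hderiv hVL).congr_deriv ?_
  field_simp at hconstraint ⊢
  linear_combination -hconstraint

/-- T'(L) = (3bL²/a)·V'(L). -/
theorem ascent_time_deriv_relation (a b c L : ℝ)
    (ha : 0 < a) (hb : 0 < b) (hc : 0 < c) (hL : 0 < L)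
    (V : ℝ → ℝ) (V' : ℝ)
    (hpos : ∀ s, 0 < s → 0 < V s)
    (hderiv : HasDerivAt V V' L)
    (heq : ∀ᶠ s in nhds L, a * V s / s + b * (V s) ^ 3 = c) :
    HasDerivAt (fun s => s / V s) (3 * b * L ^ 2 / a * V') L :=
  ascent_time_deriv_relation_general a b c L ha hL V V' hpos hderiv heq
end

section
/- Let m, g, Crr, H, b, c > 0 be real constants. Define a(D) := m·g·(H + Crr·D) and L(D) := √(H² + D²). Let D > 0 and let V : (0,∞) → (0,∞) be a function differentiable at D whose values satisfy a(s)·V(s)/L(s) + b·V(s)³ = c for all s in a neighborhood of D. Then V'(D) = (V(D)/L(D)²) · m·g·H·(D − Crr·H) / (a(D) + 3·b·V(D)²·L(D)). -/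
/-!
Differentiating the balance `a(s) V(s) / L(s) + b V(s)³ = c` at `D` gives a linear equation
for `V'(D)` whose coefficient `a/L + 3 b V²` is positive, so it can be solved. With `a' = m g Crr`,
`L' = D / L` and `L² = H² + D²`, the numerator `a L' - a' L` collapses to `m g H (D - Crr H) / L`.
-/

open Filter Topology

lemma hasDerivAt_sqrt_sq_add_sq {H x : ℝ} (hx : H ^ 2 + x ^ 2 ≠ 0) :
    HasDerivAt (fun s => √(H ^ 2 + s ^ 2)) (x / √(H ^ 2 + x ^ 2)) x := by
  have hsq : HasDerivAt (fun s : ℝ => H ^ 2 + s ^ 2) (2 * x) x := by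
    simpa using (hasDerivAt_pow 2 x).const_add (H ^ 2)
  convert hsq.sqrt hx using 1
  field_simp

lemma implicit_deriv_of_balance {A L V : ℝ → ℝ} {A' L' V' b c D : ℝ}
    (hA : HasDerivAt A A' D) (hL : HasDerivAt L L' D) (hV : HasDerivAt V V' D)
    (hL0 : L D ≠ 0) (hden : A D + 3 * b * V D ^ 2 * L D ≠ 0)
    (heq : ∀ᶠ s in 𝓝 D, A s * V s / L s + b * V s ^ 3 = c) :
    V' = V D * (A D * L' - A' * L D) / (L D * (A D + 3 * b * V D ^ 2 * L D)) := by
  have hbalance := ((hA.mul hV).div hL hL0).add ((hV.pow 3).const_mul b)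
  have hconst : HasDerivAt (fun s => A s * V s / L s + b * V s ^ 3) 0 D :=
    (hasDerivAt_const D c).congr_of_eventuallyEq heq
  have hzero := hbalance.unique hconst
  simp only [Pi.mul_apply, Nat.cast_ofNat] at hzero
  rw [eq_div_iff (mul_ne_zero hL0 hden)]
  field_simp at hzero
  linear_combination hzero

theorem deriv_speed_wrt_D_general (m g Crr H b c : ℝ)
    (hm : 0 < m) (hg : 0 < g) (hCrr : 0 < Crr) (hH : 0 < H) (hb : 0 < b)
    (D : ℝ) (hD : 0 < D)
    (V : ℝ → ℝ) (V' : ℝ)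
    (hderiv : HasDerivAt V V' D)
    (heq : ∀ᶠ s in nhds D,
      m * g * (H + Crr * s) * V s / Real.sqrt (H ^ 2 + s ^ 2) + b * (V s) ^ 3 = c) :
    V' = V D / (Real.sqrt (H ^ 2 + D ^ 2)) ^ 2 * (m * g * H * (D - Crr * H)) /
      (m * g * (H + Crr * D) + 3 * b * (V D) ^ 2 * Real.sqrt (H ^ 2 + D ^ 2)) := by
  have hHD : 0 < H ^ 2 + D ^ 2 := by positivity
  have hL : 0 < √(H ^ 2 + D ^ 2) := Real.sqrt_pos.mpr hHD
  have hden : 0 < m * g * (H + Crr * D) + 3 * b * V D ^ 2 * √(H ^ 2 + D ^ 2) := by positivity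
  have ha : HasDerivAt (fun s => m * g * (H + Crr * s)) (m * g * Crr) D := by
    simpa using (((hasDerivAt_id D).const_mul Crr).const_add H).const_mul (m * g)
  rw [implicit_deriv_of_balance ha (hasDerivAt_sqrt_sq_add_sq hHD.ne') hderiv hL.ne' hden.ne' heq]
  field_simp
  linear_combination -Crr * V D * Real.sq_sqrt hHD.le

/-- implicit differentiation with respect to the horizontal distance D. -/
theorem deriv_speed_wrt_D (m g Crr H b c : ℝ)
    (hm : 0 < m) (hg : 0 < g) (hCrr : 0 < Crr) (hH : 0 < H) (hb : 0 < b) (hc : 0 < c)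
    (D : ℝ) (hD : 0 < D)
    (V : ℝ → ℝ) (V' : ℝ)
    (hpos : ∀ s, 0 < s → 0 < V s)
    (hderiv : HasDerivAt V V' D)
    (heq : ∀ᶠ s in nhds D,
      m * g * (H + Crr * s) * V s / Real.sqrt (H ^ 2 + s ^ 2) + b * (V s) ^ 3 = c) :
    V' = V D / (Real.sqrt (H ^ 2 + D ^ 2)) ^ 2 * (m * g * H * (D - Crr * H)) /
      (m * g * (H + Crr * D) + 3 * b * (V D) ^ 2 * Real.sqrt (H ^ 2 + D ^ 2)) :=
  deriv_speed_wrt_D_general m g Crr H b c hm hg hCrr hH hb D hD V V' hderiv heq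
end

section
/- Let m, g, Crr, H, b, c > 0 be real constants. Define a(D) := m·g·(H + Crr·D) and L(D) := √(H² + D²), and for each D > 0 let V(D) be the unique positive real solution of a(D)·V/L(D) + b·V³ = c. Then the ascent time T(D) := L(D)/V(D) is strictly increasing on (0,∞): if 0 < D₁ < D₂ then L(D₁)/V(D₁) < L(D₂)/V(D₂). -/
/-! Write the power balance as `a / T + b V³ = c` with `T = L / V`. If the shallower climb were
at least as slow, its smaller load `a` over a time `T` at least as long would consume less power,
leaving more for the drag term, so it would move faster; but then its longer path at a higher
speed would take less time after all. -/

theorem time_lt_time_of_power_balance {f : ℝ → ℝ} (hf : Monotone f) {a₁ a₂ L₁ L₂ V₁ V₂ : ℝ}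
    (ha : a₁ < a₂) (ha₂ : 0 ≤ a₂) (hL₁ : 0 < L₁) (hL : L₁ < L₂) (hV₂ : 0 < V₂)
    (hbalance : a₁ * V₁ / L₁ + f V₁ = a₂ * V₂ / L₂ + f V₂) :
    L₁ / V₁ < L₂ / V₂ := by
  by_contra! hslower
  have hT₂ : 0 < L₂ / V₂ := div_pos (hL₁.trans hL) hV₂
  have hload : a₁ * V₁ / L₁ < a₂ * V₂ / L₂ := by
    rw [← div_div_eq_mul_div, ← div_div_eq_mul_div]
    exact div_lt_div₀ ha hslower ha₂ hT₂
  have hfaster : V₂ < V₁ := hf.reflect_lt (by linarith)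
  exact hslower.not_gt (div_lt_div₀ hL hfaster.le (hL₁.trans hL).le hV₂)

theorem ascent_time_wrt_D_strictMono_general (m g Crr H b c : ℝ)
    (hm : 0 < m) (hg : 0 < g) (hCrr : 0 < Crr) (hH : 0 < H) (hb : 0 < b)
    (V : ℝ → ℝ)
    (hV : ∀ D, 0 < D → 0 < V D ∧
      m * g * (H + Crr * D) * V D / Real.sqrt (H ^ 2 + D ^ 2) + b * (V D) ^ 3 = c)
    (D₁ D₂ : ℝ) (h₁ : 0 < D₁) (h₁₂ : D₁ < D₂) :
    Real.sqrt (H ^ 2 + D₁ ^ 2) / V D₁ < Real.sqrt (H ^ 2 + D₂ ^ 2) / V D₂ := by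
  have h₂ : 0 < D₂ := h₁.trans h₁₂
  obtain ⟨-, hbalance₁⟩ := hV D₁ h₁
  obtain ⟨hV₂, hbalance₂⟩ := hV D₂ h₂
  have hdrag : Monotone fun v : ℝ => b * v ^ 3 :=
    (Odd.strictMono_pow (by decide)).monotone.const_mul hb.le
  refine time_lt_time_of_power_balance hdrag ?_ (by positivity) (by positivity) ?_ hV₂
    (hbalance₁.trans hbalance₂.symm)
  · gcongr
  · gcongr

/-- for fixed height gain H, the straight-line ascent time
T(D) = L(D)/V(D) strictly increases with the horizontal distance D. -/
theorem ascent_time_wrt_D_strictMono (m g Crr H b c : ℝ)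
    (hm : 0 < m) (hg : 0 < g) (hCrr : 0 < Crr) (hH : 0 < H) (hb : 0 < b) (hc : 0 < c)
    (V : ℝ → ℝ)
    (hV : ∀ D, 0 < D → 0 < V D ∧
      m * g * (H + Crr * D) * V D / Real.sqrt (H ^ 2 + D ^ 2) + b * (V D) ^ 3 = c)
    (D₁ D₂ : ℝ) (h₁ : 0 < D₁) (h₁₂ : D₁ < D₂) :
    Real.sqrt (H ^ 2 + D₁ ^ 2) / V D₁ < Real.sqrt (H ^ 2 + D₂ ^ 2) / V D₂ :=
  ascent_time_wrt_D_strictMono_general m g Crr H b c hm hg hCrr hH hb V hV D₁ D₂ h₁ h₁₂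
end

section
/- Let m, g, Crr, H, b, c > 0 be real constants. For each slope angle θ ∈ (0, π/2), let V(θ) be the unique positive real solution of m·g·(sin θ + Crr·cos θ)·V + b·V³ = c. Then the vertical speed θ ↦ V(θ)·sin θ is strictly increasing on (0, π/2). -/
/-!
Write `u = V sin θ` and `w = V cos θ` for the vertical and horizontal speeds, so that the power
balance reads `m g u + m g Crr w + b V³ = c` with `V² = u² + w²`. If the vertical speed failed to
increase from `θ₁` to a steeper `θ₂`, the horizontal speed would strictly decrease (the ratio
`w / u = cot θ` does), hence so would the total speed `V`, and the left-hand side of the balance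
could not equal `c` at both angles.
-/

open Real

theorem mul_cos_lt_mul_cos_of_mul_sin_le {θ₁ θ₂ r₁ r₂ : ℝ} (h₁ : θ₁ ∈ Set.Ioc 0 (π / 2))
    (h₁₂ : θ₁ < θ₂) (h₂ : θ₂ < π) (hr₂ : 0 < r₂) (hsin : r₂ * sin θ₂ ≤ r₁ * sin θ₁) :
    r₂ * cos θ₂ < r₁ * cos θ₁ := by
  have hsin₁ : 0 < sin θ₁ := sin_pos_of_pos_of_lt_pi h₁.1 (by linarith [h₁.2, pi_pos])
  have hcos₁ : 0 ≤ cos θ₁ := cos_nonneg_of_mem_Icc ⟨by linarith [h₁.1, pi_pos], h₁.2⟩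
  have hsub : 0 < sin θ₂ * cos θ₁ - cos θ₂ * sin θ₁ := by
    rw [← sin_sub]
    exact sin_pos_of_pos_of_lt_pi (sub_pos.mpr h₁₂) (by linarith [h₁.1])
  refine lt_of_mul_lt_mul_right ?_ hsin₁.le
  calc r₂ * cos θ₂ * sin θ₁ < r₂ * sin θ₂ * cos θ₁ := by nlinarith [mul_pos hr₂ hsub]
    _ ≤ r₁ * sin θ₁ * cos θ₁ := mul_le_mul_of_nonneg_right hsin hcos₁
    _ = r₁ * cos θ₁ * sin θ₁ := by ring

theorem lt_of_mul_sin_le_of_mul_cos_lt {θ₁ θ₂ r₁ r₂ : ℝ} (hr₁ : 0 ≤ r₁)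
    (hu : 0 ≤ r₂ * sin θ₂) (hsin : r₂ * sin θ₂ ≤ r₁ * sin θ₁)
    (hw : 0 ≤ r₂ * cos θ₂) (hcos : r₂ * cos θ₂ < r₁ * cos θ₁) : r₂ < r₁ := by
  have polar (r θ : ℝ) : (r * sin θ) ^ 2 + (r * cos θ) ^ 2 = r ^ 2 := by
    linear_combination r ^ 2 * sin_sq_add_cos_sq θ
  refine lt_of_pow_lt_pow_left₀ 2 hr₁ ?_
  rw [← polar r₁ θ₁, ← polar r₂ θ₂]
  exact add_lt_add_of_le_of_lt (pow_le_pow_left₀ hu hsin 2) (pow_lt_pow_left₀ hcos hw two_ne_zero)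

theorem vertical_speed_strictMono_general (m g Crr b c : ℝ)
    (hm : 0 < m) (hg : 0 < g) (hCrr : 0 < Crr) (hb : 0 < b)
    (V : ℝ → ℝ)
    (hV : ∀ θ ∈ Set.Ioo (0 : ℝ) (Real.pi / 2), 0 < V θ ∧
      m * g * (Real.sin θ + Crr * Real.cos θ) * V θ + b * (V θ) ^ 3 = c) :
    StrictMonoOn (fun θ => V θ * Real.sin θ) (Set.Ioo (0 : ℝ) (Real.pi / 2)) := by
  intro θ₁ h₁ θ₂ h₂ h₁₂
  obtain ⟨hV₁, hbal₁⟩ := hV θ₁ h₁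
  obtain ⟨hV₂, hbal₂⟩ := hV θ₂ h₂
  have hsin₂ : 0 < sin θ₂ := sin_pos_of_pos_of_lt_pi h₂.1 (by linarith [h₂.2, pi_pos])
  have hcos₂ : 0 < cos θ₂ := cos_pos_of_mem_Ioo ⟨by linarith [h₂.1, pi_pos], h₂.2⟩
  by_contra! hsin
  have hcos : V θ₂ * cos θ₂ < V θ₁ * cos θ₁ :=
    mul_cos_lt_mul_cos_of_mul_sin_le (Set.Ioo_subset_Ioc_self h₁) h₁₂
      (by linarith [h₂.2, pi_pos]) hV₂ hsin
  have hspeed : V θ₂ < V θ₁ := lt_of_mul_sin_le_of_mul_cos_lt hV₁.le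
    (by positivity) hsin (by positivity) hcos
  have hmg : 0 < m * g := mul_pos hm hg
  linarith [mul_le_mul_of_nonneg_left hsin hmg.le,
    mul_le_mul_of_nonneg_left hcos.le (mul_pos hmg hCrr).le,
    mul_lt_mul_of_pos_left (pow_lt_pow_left₀ hspeed hV₂.le three_ne_zero) hb]

/-- the vertical speed θ ↦ V(θ)·sin θ is strictly increasing on (0, π/2). -/
theorem vertical_speed_strictMono (m g Crr H b c : ℝ)
    (hm : 0 < m) (hg : 0 < g) (hCrr : 0 < Crr) (hH : 0 < H) (hb : 0 < b) (hc : 0 < c)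
    (V : ℝ → ℝ)
    (hV : ∀ θ ∈ Set.Ioo (0 : ℝ) (Real.pi / 2), 0 < V θ ∧
      m * g * (Real.sin θ + Crr * Real.cos θ) * V θ + b * (V θ) ^ 3 = c) :
    StrictMonoOn (fun θ => V θ * Real.sin θ) (Set.Ioo (0 : ℝ) (Real.pi / 2)) :=
  vertical_speed_strictMono_general m g Crr b c hm hg hCrr hb V hV
end

section
/- Let m, g, Crr, H, b, c > 0 be real constants. For each slope angle θ ∈ (0, π/2), let V(θ) be the unique positive real solution of m·g·(sin θ + Crr·cos θ)·V + b·V³ = c, and define the ascent time T(θ) := H / (V(θ)·sin θ) for a height gain H. Then T is strictly decreasing on (0, π/2). -/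
/-! The vertical speed `V θ * sin θ` increases with `θ`. If it did not increase from `θ₁` to a
steeper `θ₂`, then `V θ₂ < V θ₁` since `sin θ₁ < sin θ₂`; as also `cos θ₂ < cos θ₁`, the grade and
rolling-resistance terms of the power balance would be no larger at `θ₂` and the drag term
strictly smaller, although both balances equal the same power `c`. -/

open Real

noncomputable def climbPower (m g Crr b θ v : ℝ) : ℝ :=
  m * g * (sin θ + Crr * cos θ) * v + b * v ^ 3

theorem climbPower_lt_of_mul_sin_le {m g Crr b θ₁ θ₂ v₁ v₂ : ℝ}
    (hm : 0 ≤ m) (hg : 0 ≤ g) (hCrr : 0 ≤ Crr) (hb : 0 < b)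
    (hθ₁ : 0 < θ₁) (hθ : θ₁ < θ₂) (hθ₂ : θ₂ ≤ π / 2) (hv₂ : 0 < v₂)
    (hvert : v₂ * sin θ₂ ≤ v₁ * sin θ₁) :
    climbPower m g Crr b θ₂ v₂ < climbPower m g Crr b θ₁ v₁ := by
  have hsin₁ : 0 < sin θ₁ := sin_pos_of_pos_of_lt_pi hθ₁ (by linarith [pi_pos])
  have hsin : sin θ₁ < sin θ₂ :=
    sin_lt_sin_of_lt_of_le_pi_div_two (by linarith [pi_pos]) hθ₂ hθ
  have hcos : cos θ₂ ≤ cos θ₁ := (cos_lt_cos_of_nonneg_of_le_pi_div_two hθ₁.le hθ₂ hθ).le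
  have hcos₂ : 0 ≤ cos θ₂ := cos_nonneg_of_neg_pi_div_two_le_of_le (by linarith [pi_pos]) hθ₂
  have hv : v₂ < v₁ := by
    refine lt_of_mul_lt_mul_right ?_ hsin₁.le
    calc v₂ * sin θ₁ < v₂ * sin θ₂ := mul_lt_mul_of_pos_left hsin hv₂
      _ ≤ v₁ * sin θ₁ := hvert
  have hroll : Crr * cos θ₂ * v₂ ≤ Crr * cos θ₁ * v₁ := by
    have hcos₁ : 0 ≤ cos θ₁ := hcos₂.trans hcos
    gcongr
  have hgrade : m * g * (sin θ₂ + Crr * cos θ₂) * v₂ ≤ m * g * (sin θ₁ + Crr * cos θ₁) * v₁ := by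
    have h : (sin θ₂ + Crr * cos θ₂) * v₂ ≤ (sin θ₁ + Crr * cos θ₁) * v₁ := by linarith
    simpa only [mul_assoc] using mul_le_mul_of_nonneg_left h (mul_nonneg hm hg)
  have hdrag : b * v₂ ^ 3 < b * v₁ ^ 3 := by gcongr
  exact add_lt_add_of_le_of_lt hgrade hdrag

theorem ascent_time_wrt_angle_strictAnti_general (m g Crr H b c : ℝ)
    (hm : 0 < m) (hg : 0 < g) (hCrr : 0 < Crr) (hH : 0 < H) (hb : 0 < b)
    (V : ℝ → ℝ)
    (hV : ∀ θ ∈ Set.Ioo (0 : ℝ) (Real.pi / 2), 0 < V θ ∧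
      m * g * (Real.sin θ + Crr * Real.cos θ) * V θ + b * (V θ) ^ 3 = c) :
    StrictAntiOn (fun θ => H / (V θ * Real.sin θ)) (Set.Ioo (0 : ℝ) (Real.pi / 2)) := by
  intro θ₁ hθ₁ θ₂ hθ₂ hθ
  obtain ⟨hV₁, hbalance₁⟩ := hV θ₁ hθ₁
  obtain ⟨hV₂, hbalance₂⟩ := hV θ₂ hθ₂
  have hvert : V θ₁ * sin θ₁ < V θ₂ * sin θ₂ := by
    by_contra! h
    have := climbPower_lt_of_mul_sin_le hm.le hg.le hCrr.le hb hθ₁.1 hθ hθ₂.2.le hV₂ h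
    rw [climbPower, climbPower, hbalance₁, hbalance₂] at this
    exact lt_irrefl c this
  have hsin₁ : 0 < sin θ₁ := sin_pos_of_pos_of_lt_pi hθ₁.1 (by linarith [hθ₁.2, pi_pos])
  exact div_lt_div_of_pos_left hH (mul_pos hV₁ hsin₁) hvert

/-- the ascent time T(θ) = H/(V(θ)·sin θ) is strictly decreasing
on (0, π/2). -/
theorem ascent_time_wrt_angle_strictAnti (m g Crr H b c : ℝ)
    (hm : 0 < m) (hg : 0 < g) (hCrr : 0 < Crr) (hH : 0 < H) (hb : 0 < b) (hc : 0 < c)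
    (V : ℝ → ℝ)
    (hV : ∀ θ ∈ Set.Ioo (0 : ℝ) (Real.pi / 2), 0 < V θ ∧
      m * g * (Real.sin θ + Crr * Real.cos θ) * V θ + b * (V θ) ^ 3 = c) :
    StrictAntiOn (fun θ => H / (V θ * Real.sin θ)) (Set.Ioo (0 : ℝ) (Real.pi / 2)) :=
  ascent_time_wrt_angle_strictAnti_general m g Crr H b c hm hg hCrr hH hb V hV
end
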